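/- arXiv:math/0610690 — 2 statements merged into one kernel-verified Lean document; each statement's English description precedes it below -/
import Mathlib

section
/- The point (a₁/a₂, 0, 0) is always a solution of the equilibrium system a₁ - a₂x - a₃xz = 0, a₄y - a₃xz = 0, a₄a₅y - a₆z - a₇xz = 0, and if 0 ≤ a₇ < a₃a₅ and 0 < a₂a₆ < a₁(a₃a₅ - a₇), these are exactly two distinct solutions of the system, namely (a₁/a₂, 0, 0) and the interior equilibrium (x₀, y₀, z₀). -/
/-!
Subtracting `a₅` times the second equation from the third leaves
`z ((a₃a₅ - a₇) x - a₆) = 0`. If `z = 0`, the second equation forces `y = 0` and the first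
`x = a₁/a₂`; otherwise `x = a₆/(a₃a₅ - a₇)`, and the first and second equations then determine
`z` and `y` linearly. The gap `a₂a₆ < a₁(a₃a₅ - a₇)` makes the interior `z₀` nonzero, so the two
equilibria differ.
-/

namespace Equilibrium

variable {K : Type*} [Field K] {a1 a2 a3 a4 a5 a6 a7 : K}

def IsEquilibrium (a1 a2 a3 a4 a5 a6 a7 : K) (p : K × K × K) : Prop :=
  a1 - a2 * p.1 - a3 * p.1 * p.2.2 = 0 ∧
  a4 * p.2.1 - a3 * p.1 * p.2.2 = 0 ∧
  a4 * a5 * p.2.1 - a6 * p.2.2 - a7 * p.1 * p.2.2 = 0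

def interior (a1 a2 a3 a4 a5 a6 a7 : K) : K × K × K :=
  (a6 / (a3 * a5 - a7),
   (a1 * (a3 * a5 - a7) - a2 * a6) / (a4 * (a3 * a5 - a7)),
   (a1 * (a3 * a5 - a7) - a2 * a6) / (a3 * a6))

theorem isEquilibrium_boundary (h2 : a2 ≠ 0) :
    IsEquilibrium a1 a2 a3 a4 a5 a6 a7 (a1 / a2, 0, 0) := by
  refine ⟨?_, by ring, by ring⟩
  field_simp
  ring

theorem isEquilibrium_interior (h3 : a3 ≠ 0) (h4 : a4 ≠ 0) (h6 : a6 ≠ 0)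
    (hD : a3 * a5 - a7 ≠ 0) :
    IsEquilibrium a1 a2 a3 a4 a5 a6 a7 (interior a1 a2 a3 a4 a5 a6 a7) := by
  simp only [IsEquilibrium, interior]
  -- `field_simp` rewrites the denominator into this form before looking for its nonvanishing
  have hD' : a5 * a3 - a7 ≠ 0 := by rwa [mul_comm a5]
  refine ⟨?_, ?_, ?_⟩ <;> field_simp <;> ring

theorem boundary_ne_interior (h3 : a3 ≠ 0) (h6 : a6 ≠ 0)
    (hgap : a2 * a6 ≠ a1 * (a3 * a5 - a7)) :
    ((a1 / a2, 0, 0) : K × K × K) ≠ interior a1 a2 a3 a4 a5 a6 a7 := by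
  intro h
  have hz : (a1 * (a3 * a5 - a7) - a2 * a6) / (a3 * a6) = 0 :=
    (congrArg (fun p : K × K × K => p.2.2) h).symm
  rcases div_eq_zero_iff.mp hz with hnum | hden
  · exact hgap (sub_eq_zero.mp hnum).symm
  · exact mul_ne_zero h3 h6 hden

namespace IsEquilibrium

variable {p : K × K × K}

theorem z_eq_zero_or_x_eq (hp : IsEquilibrium a1 a2 a3 a4 a5 a6 a7 p) :
    p.2.2 = 0 ∨ (a3 * a5 - a7) * p.1 = a6 := by
  obtain ⟨-, e2, e3⟩ := hp
  have key : p.2.2 * ((a3 * a5 - a7) * p.1 - a6) = 0 := by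
    linear_combination e3 - a5 * e2
  exact (mul_eq_zero.mp key).imp_right sub_eq_zero.mp

theorem eq_boundary_of_z_eq_zero (h2 : a2 ≠ 0) (h4 : a4 ≠ 0)
    (hp : IsEquilibrium a1 a2 a3 a4 a5 a6 a7 p) (hz : p.2.2 = 0) :
    p = (a1 / a2, 0, 0) := by
  obtain ⟨x, y, z⟩ := p
  obtain ⟨e1, e2, -⟩ := hp
  simp only at hz e1 e2
  subst hz
  have hy : y = 0 := by simpa [h4] using e2
  have hx : x = a1 / a2 := by
    rw [eq_div_iff h2]
    linear_combination -e1
  rw [hx, hy]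

theorem eq_interior_of_x_eq (h3 : a3 ≠ 0) (h4 : a4 ≠ 0) (h6 : a6 ≠ 0)
    (hD : a3 * a5 - a7 ≠ 0) (hp : IsEquilibrium a1 a2 a3 a4 a5 a6 a7 p)
    (hx : (a3 * a5 - a7) * p.1 = a6) :
    p = interior a1 a2 a3 a4 a5 a6 a7 := by
  obtain ⟨x, y, z⟩ := p
  obtain ⟨e1, e2, -⟩ := hp
  simp only at hx e1 e2
  have hx' : x = a6 / (a3 * a5 - a7) := by
    rw [eq_div_iff hD]
    linear_combination hx
  subst hx'
  have hz : z = (a1 * (a3 * a5 - a7) - a2 * a6) / (a3 * a6) := by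
    field_simp at e1 ⊢
    linear_combination -e1
  subst hz
  have hy : y = (a1 * (a3 * a5 - a7) - a2 * a6) / (a4 * (a3 * a5 - a7)) := by
    field_simp at e2 ⊢
    linear_combination e2
  rw [hy, interior]

end IsEquilibrium

theorem setOf_isEquilibrium (h2 : a2 ≠ 0) (h3 : a3 ≠ 0) (h4 : a4 ≠ 0) (h6 : a6 ≠ 0)
    (hD : a3 * a5 - a7 ≠ 0) :
    {p | IsEquilibrium a1 a2 a3 a4 a5 a6 a7 p} =
      {(a1 / a2, 0, 0), interior a1 a2 a3 a4 a5 a6 a7} := by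
  ext p
  constructor
  · intro hp
    rcases hp.z_eq_zero_or_x_eq with hz | hx
    · exact Or.inl (hp.eq_boundary_of_z_eq_zero h2 h4 hz)
    · exact Or.inr (hp.eq_interior_of_x_eq h3 h4 h6 hD hx)
  · rintro (rfl | rfl)
    · exact isEquilibrium_boundary h2
    · exact isEquilibrium_interior h3 h4 h6 hD

end Equilibrium

open Equilibrium in
theorem equilibria_exactly_two_general
    (a1 a2 a3 a4 a5 a6 a7 : ℝ)
    (h2 : 0 < a2) (h3 : 0 < a3) (h4 : 0 < a4)
    (h6 : 0 < a6)
    (h7' : a7 < a3 * a5)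
    (h8' : a2 * a6 < a1 * (a3 * a5 - a7)) :
    (a1 - a2 * (a1 / a2) - a3 * (a1 / a2) * 0 = 0 ∧
     a4 * 0 - a3 * (a1 / a2) * 0 = 0 ∧
     a4 * a5 * 0 - a6 * 0 - a7 * (a1 / a2) * 0 = 0) ∧
    (a1 / a2, (0 : ℝ), (0 : ℝ)) ≠
      (a6 / (a3 * a5 - a7),
       (a1 * (a3 * a5 - a7) - a2 * a6) / (a4 * (a3 * a5 - a7)),
       (a1 * (a3 * a5 - a7) - a2 * a6) / (a3 * a6)) ∧
    {p : ℝ × ℝ × ℝ |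
        a1 - a2 * p.1 - a3 * p.1 * p.2.2 = 0 ∧
        a4 * p.2.1 - a3 * p.1 * p.2.2 = 0 ∧
        a4 * a5 * p.2.1 - a6 * p.2.2 - a7 * p.1 * p.2.2 = 0} =
      {(a1 / a2, (0 : ℝ), (0 : ℝ)),
       (a6 / (a3 * a5 - a7),
        (a1 * (a3 * a5 - a7) - a2 * a6) / (a4 * (a3 * a5 - a7)),
        (a1 * (a3 * a5 - a7) - a2 * a6) / (a3 * a6))} := by
  have hD : a3 * a5 - a7 ≠ 0 := (sub_pos.mpr h7').ne'
  exact ⟨isEquilibrium_boundary h2.ne', boundary_ne_interior h3.ne' h6.ne' h8'.ne,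
    setOf_isEquilibrium h2.ne' h3.ne' h4.ne' h6.ne' hD⟩

theorem equilibria_exactly_two
    (a1 a2 a3 a4 a5 a6 a7 : ℝ)
    (h1 : 0 < a1) (h2 : 0 < a2) (h3 : 0 < a3) (h4 : 0 < a4)
    (h5 : 0 < a5) (h6 : 0 < a6)
    (h7 : 0 ≤ a7) (h7' : a7 < a3 * a5)
    (h8 : 0 < a2 * a6) (h8' : a2 * a6 < a1 * (a3 * a5 - a7)) :
    (a1 - a2 * (a1 / a2) - a3 * (a1 / a2) * 0 = 0 ∧
     a4 * 0 - a3 * (a1 / a2) * 0 = 0 ∧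
     a4 * a5 * 0 - a6 * 0 - a7 * (a1 / a2) * 0 = 0) ∧
    (a1 / a2, (0 : ℝ), (0 : ℝ)) ≠
      (a6 / (a3 * a5 - a7),
       (a1 * (a3 * a5 - a7) - a2 * a6) / (a4 * (a3 * a5 - a7)),
       (a1 * (a3 * a5 - a7) - a2 * a6) / (a3 * a6)) ∧
    {p : ℝ × ℝ × ℝ |
        a1 - a2 * p.1 - a3 * p.1 * p.2.2 = 0 ∧
        a4 * p.2.1 - a3 * p.1 * p.2.2 = 0 ∧
        a4 * a5 * p.2.1 - a6 * p.2.2 - a7 * p.1 * p.2.2 = 0} =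
      {(a1 / a2, (0 : ℝ), (0 : ℝ)),
       (a6 / (a3 * a5 - a7),
        (a1 * (a3 * a5 - a7) - a2 * a6) / (a4 * (a3 * a5 - a7)),
        (a1 * (a3 * a5 - a7) - a2 * a6) / (a3 * a6))} :=
  equilibria_exactly_two_general a1 a2 a3 a4 a5 a6 a7 h2 h3 h4 h6 h7' h8'
end

section
/- A purely imaginary number λ = iω with ω > 0 is a root of λ³ + p₂λ² + p₁λ + (r₂λ² + r₁λ + r₀)e^{-λτ} = 0 for some τ ≥ 0 only if ω² is a positive root of the cubic u³ + n₁u² + n₂u + n₃ = 0, where n₁ = p₂² - 2p₁ - r₂², n₂ = p₁² - r₁² + 2r₀r₂, n₃ = -r₀². -/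
/-! On the imaginary axis the factor `e^{-iωτ}` has modulus one, so a root `iω` of
`P(λ) + Q(λ) e^{-λτ}` forces `|P(iω)|² = |Q(iω)|²`. Splitting `P(iω)` and
`Q(iω)` into real and imaginary parts, `|P(iω)|² - |Q(iω)|²` is exactly the cubic
`u³ + n₁u² + n₂u + n₃` evaluated at `u = ω²`. -/

open Complex

lemma norm_eq_norm_of_add_mul_exp_eq_zero {a b z : ℂ} (hz : z.re = 0)
    (h : a + b * exp z = 0) : ‖a‖ = ‖b‖ := by
  rw [eq_neg_of_add_eq_zero_left h, norm_neg, norm_mul, norm_exp, hz, Real.exp_zero, mul_one]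

lemma normSq_cubic_at_I_mul (p1 p2 ω : ℝ) :
    normSq ((I * ω) ^ 3 + (p2 : ℂ) * (I * ω) ^ 2 + (p1 : ℂ) * (I * ω)) =
      (p2 * ω ^ 2) ^ 2 + (ω ^ 3 - p1 * ω) ^ 2 := by
  have hsplit : (I * ω) ^ 3 + (p2 : ℂ) * (I * ω) ^ 2 + (p1 : ℂ) * (I * ω) =
      ((-(p2 * ω ^ 2) : ℝ) : ℂ) + ((p1 * ω - ω ^ 3 : ℝ) : ℂ) * I := by
    push_cast
    linear_combination (ω ^ 3 * I + p2 * ω ^ 2) * I_sq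
  rw [hsplit, normSq_add_mul_I]
  ring

lemma normSq_quadratic_at_I_mul (r0 r1 r2 ω : ℝ) :
    normSq ((r2 : ℂ) * (I * ω) ^ 2 + (r1 : ℂ) * (I * ω) + (r0 : ℂ)) =
      (r0 - r2 * ω ^ 2) ^ 2 + (r1 * ω) ^ 2 := by
  have hsplit : (r2 : ℂ) * (I * ω) ^ 2 + (r1 : ℂ) * (I * ω) + (r0 : ℂ) =
      ((r0 - r2 * ω ^ 2 : ℝ) : ℂ) + ((r1 * ω : ℝ) : ℂ) * I := by
    push_cast
    linear_combination (r2 * ω ^ 2) * I_sq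
  rw [hsplit, normSq_add_mul_I]

theorem imaginary_root_gives_cubic
    (p1 p2 r0 r1 r2 ω : ℝ) (hω : 0 < ω)
    (h : ∃ τ : ℝ, 0 ≤ τ ∧
      (Complex.I * ω) ^ 3 + (p2 : ℂ) * (Complex.I * ω) ^ 2 +
        (p1 : ℂ) * (Complex.I * ω) +
        ((r2 : ℂ) * (Complex.I * ω) ^ 2 + (r1 : ℂ) * (Complex.I * ω) + (r0 : ℂ)) *
          Complex.exp (-(Complex.I * ω) * τ) = 0) :
    0 < ω ^ 2 ∧
    (ω ^ 2) ^ 3 + (p2 ^ 2 - 2 * p1 - r2 ^ 2) * (ω ^ 2) ^ 2 +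
      (p1 ^ 2 - r1 ^ 2 + 2 * r0 * r2) * (ω ^ 2) + (-(r0 ^ 2)) = 0 := by
  obtain ⟨τ, -, hroot⟩ := h
  refine ⟨by positivity, ?_⟩
  have hnorm := norm_eq_norm_of_add_mul_exp_eq_zero (by simp) hroot
  have hnormSq := congrArg (· ^ 2) hnorm
  simp only [Complex.sq_norm, normSq_cubic_at_I_mul, normSq_quadratic_at_I_mul] at hnormSq
  linear_combination hnormSq
end
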